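/- Per-class peak age of information: for a device of a QoS class with service (transmission success) probability d satisfying α < d < 1, the mean peak AoI, equal to the mean inter-arrival time 1/α plus the mean waiting time Σ_{m} m·Wᵐ, equals 1/α + α(1−α)/(d(d−α)). -/

import Mathlib

/-!
Given a queue length `v ≥ 1`, the waiting time is negative binomial with parameters `v, d`.
Averaged over the geometric queue-length law `xᵥ ∝ Rᵛ`, the binomial theorem turns `W` into a
geometric law `W m = C qᵐ⁻¹` with `q = R d + (1 - d) = (1 - d)/(1 - α)`, and its mean
`C / (1 - q)²` is `α(1 - α)/(d(d - α))`.
-/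

open Finset

theorem sum_Icc_pow_mul_choose_mul_pow {S : Type*} [CommSemiring S] (a b : S) {m : ℕ}
    (hm : 1 ≤ m) :
    ∑ v ∈ Icc 1 m, a ^ v * ((m - 1).choose (v - 1) : S) * b ^ (m - v) =
      a * (a + b) ^ (m - 1) := by
  obtain ⟨n, rfl⟩ : ∃ n, m = n + 1 := ⟨m - 1, by omega⟩
  rw [← Ico_add_one_right_eq_Icc, sum_Ico_eq_sum_range, add_pow, mul_sum]
  refine sum_congr rfl fun i hi => ?_
  have hi : i ≤ n := Nat.lt_succ_iff.mp (mem_range.mp hi)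
  rw [show 1 + i - 1 = i by omega, show n + 1 - (1 + i) = n - i by omega,
    Nat.add_sub_cancel, pow_add, pow_one]
  ring

theorem hasSum_coe_mul_geometric_pred {𝕜 : Type*} [NormedField 𝕜] {r : 𝕜} (hr : ‖r‖ < 1) :
    HasSum (fun m : ℕ => (m : 𝕜) * r ^ (m - 1)) (1 / (1 - r) ^ 2) := by
  rw [← hasSum_nat_add_iff' 1]
  simpa using hasSum_choose_mul_geometric_of_norm_lt_one 1 hr

theorem geoGeoOne_waiting_sum_eq_geometric {α d R : ℝ} {x : ℕ → ℝ} (hd0 : 0 < d) (hd : d < 1)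
    (hα1 : α < 1) (hR : R = α * (1 - d) / ((1 - α) * d)) (hx0 : x 0 = (d - α) / d)
    (hx : ∀ i : ℕ, 1 ≤ i → x i = R ^ i * x 0 / (1 - d)) {m : ℕ} (hm : 1 ≤ m) :
    ∑ v ∈ Icc 1 m, x v * ((m - 1).choose (v - 1) : ℝ) * d ^ v * (1 - d) ^ (m - v) =
      α * (d - α) / ((1 - α) * d) * ((1 - d) / (1 - α)) ^ (m - 1) := by
  have h1d : 1 - d ≠ 0 := by linarith
  have h1α : 1 - α ≠ 0 := by linarith
  have hq : R * d + (1 - d) = (1 - d) / (1 - α) := by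
    rw [hR]; field_simp; ring
  calc ∑ v ∈ Icc 1 m, x v * ((m - 1).choose (v - 1) : ℝ) * d ^ v * (1 - d) ^ (m - v)
      = x 0 / (1 - d) *
          ∑ v ∈ Icc 1 m, (R * d) ^ v * ((m - 1).choose (v - 1) : ℝ) * (1 - d) ^ (m - v) := by
        rw [mul_sum]
        refine sum_congr rfl fun v hv => ?_
        rw [hx v (mem_Icc.mp hv).1]
        ring
    _ = x 0 / (1 - d) * (R * d) * ((1 - d) / (1 - α)) ^ (m - 1) := by
        rw [sum_Icc_pow_mul_choose_mul_pow _ _ hm, hq, ← mul_assoc]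
    _ = α * (d - α) / ((1 - α) * d) * ((1 - d) / (1 - α)) ^ (m - 1) := by
        rw [hx0, hR]
        field_simp

theorem geo_geo_one_peak_aoi_general (α d : ℝ) (hα : 0 < α) (hαd : α < d) (hd : d < 1)
    (R : ℝ) (hR : R = α * (1 - d) / ((1 - α) * d))
    (x : ℕ → ℝ) (hx0 : x 0 = (d - α) / d)
    (hx : ∀ i : ℕ, 1 ≤ i → x i = R ^ i * x 0 / (1 - d))
    (W : ℕ → ℝ)
    (hW : ∀ m : ℕ, 1 ≤ m →
      W m = ∑ v ∈ Finset.Icc 1 m,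
        x v * ((m - 1).choose (v - 1) : ℝ) * d ^ v * (1 - d) ^ (m - v)) :
    1 / α + (∑' m : ℕ, (m : ℝ) * W m) = 1 / α + α * (1 - α) / (d * (d - α)) := by
  have hd0 : 0 < d := hα.trans hαd
  set q := (1 - d) / (1 - α) with hq_def
  set C := α * (d - α) / ((1 - α) * d) with hC
  have hq : ‖q‖ < 1 := by
    rw [Real.norm_eq_abs, abs_of_pos (div_pos (by linarith) (by linarith)),
      div_lt_one (by linarith)]
    linarith
  have hmean : ∀ m : ℕ, (m : ℝ) * W m = C * (m * q ^ (m - 1)) := by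
    rintro (_ | m)
    · simp
    · rw [hW _ m.succ_pos, geoGeoOne_waiting_sum_eq_geometric hd0 hd (hαd.trans hd) hR hx0 hx
        m.succ_pos]
      ring
  rw [tsum_congr hmean, tsum_mul_left, (hasSum_coe_mul_geometric_pred hq).tsum_eq]
  have hdα : d - α ≠ 0 := by linarith
  have h1α : 1 - α ≠ 0 := by linarith
  have h1q : 1 - q = (d - α) / (1 - α) := by rw [hq_def]; field_simp; ring
  rw [h1q, hC]
  field_simp

/-- Per-class peak age of information of the Geo/Geo/1 queue: the mean peak AoI,
equal to the mean inter-arrival time `1/α` plus the mean waiting time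
`∑_m m * W m`, equals `1/α + α(1-α)/(d(d-α))`. -/
theorem geo_geo_one_peak_aoi (α d : ℝ) (hα : 0 < α) (hαd : α < d) (hd : d < 1)
    (R : ℝ) (hR : R = α * (1 - d) / ((1 - α) * d))
    (x : ℕ → ℝ) (hx0 : x 0 = (d - α) / d)
    (hx : ∀ i : ℕ, 1 ≤ i → x i = R ^ i * x 0 / (1 - d))
    (W : ℕ → ℝ) (hW0 : W 0 = (d - α) / d)
    (hW : ∀ m : ℕ, 1 ≤ m →
      W m = ∑ v ∈ Finset.Icc 1 m,
        x v * ((m - 1).choose (v - 1) : ℝ) * d ^ v * (1 - d) ^ (m - v)) :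
    1 / α + (∑' m : ℕ, (m : ℝ) * W m) = 1 / α + α * (1 - α) / (d * (d - α)) :=
  geo_geo_one_peak_aoi_general α d hα hαd hd R hR x hx0 hx W hW
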